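/- arXiv:2602.21275 — 6 statements merged into one kernel-verified Lean document; each statement's English description precedes it below -/
import Mathlib

section
/- Let (t_i)_{i∈ℕ} be a sequence of real numbers that is algebraically independent over ℚ, and for indices a, b set P_{a,b} = (t_a + t_b, t_a² + t_a t_b + t_b²) ∈ ℝ². Then for any four distinct indices i, j, k, ℓ, the three points P_{i,j}, P_{i,k}, P_{i,ℓ} are not collinear. -/
/-- The point `P(a,b) = (a + b, a² + ab + b²)` in the plane. -/
noncomputable def Ppt (a b : ℝ) : ℝ × ℝ := (a + b, a ^ 2 + a * b + b ^ 2)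

theorem stmt_3 (t : ℕ → ℝ) (ht : AlgebraicIndependent ℚ t)
    (i j k l : ℕ) (hij : i ≠ j) (hik : i ≠ k) (hil : i ≠ l)
    (hjk : j ≠ k) (hjl : j ≠ l) (hkl : k ≠ l) :
    ¬ Collinear ℝ ({Ppt (t i) (t j), Ppt (t i) (t k), Ppt (t i) (t l)} : Set (ℝ × ℝ)) := by
  intro hcol
  have hinj := ht.injective
  have hjk' : t j ≠ t k := fun h => hjk (hinj h)
  have hjl' : t j ≠ t l := fun h => hjl (hinj h)
  have hkl' : t k ≠ t l := fun h => hkl (hinj h)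
  set a := t i; set b := t j; set c := t k; set d := t l
  have hmem : Ppt a b ∈ ({Ppt a b, Ppt a c, Ppt a d} : Set (ℝ × ℝ)) := by
    simp
  obtain ⟨v, hv⟩ := (collinear_iff_of_mem hmem).mp hcol
  obtain ⟨r₁, hr₁⟩ := hv (Ppt a c) (by simp)
  obtain ⟨r₂, hr₂⟩ := hv (Ppt a d) (by simp)
  have h1 : Ppt a c - Ppt a b = r₁ • v := by
    rw [hr₁]; simp [vadd_eq_add]
  have h2 : Ppt a d - Ppt a b = r₂ • v := by
    rw [hr₂]; simp [vadd_eq_add]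
  have e1x : (a + c) - (a + b) = r₁ * v.1 := by
    simpa [Ppt] using congrArg Prod.fst h1
  have e1y : (a^2+a*c+c^2) - (a^2+a*b+b^2) = r₁ * v.2 := by
    simpa [Ppt] using congrArg Prod.snd h1
  have e2x : (a + d) - (a + b) = r₂ * v.1 := by
    simpa [Ppt] using congrArg Prod.fst h2
  have e2y : (a^2+a*d+d^2) - (a^2+a*b+b^2) = r₂ * v.2 := by
    simpa [Ppt] using congrArg Prod.snd h2
  have key : ((a+c)-(a+b)) * ((a^2+a*d+d^2)-(a^2+a*b+b^2))
      - ((a+d)-(a+b)) * ((a^2+a*c+c^2)-(a^2+a*b+b^2)) = 0 := by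
    rw [e1x, e2y, e2x, e1y]; ring
  have hz : (c - b) * (d - b) * (d - c) = 0 := by linear_combination key
  rcases mul_eq_zero.mp hz with h | h
  · rcases mul_eq_zero.mp h with h | h
    · exact hjk' (sub_eq_zero.mp h).symm
    · exact hjl' (sub_eq_zero.mp h).symm
  · exact hkl' (sub_eq_zero.mp h).symm
end

section
/- Let (t_i)_{i∈ℕ} be a sequence of real numbers that is algebraically independent over ℚ, and for indices a, b set P_{a,b} = (t_a + t_b, t_a² + t_a t_b + t_b²) ∈ ℝ². Then for any four distinct indices i, j, k, ℓ, the three points P_{i,j}, P_{j,k}, P_{k,ℓ} are not collinear. -/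
lemma collinear_det (p q r : ℝ × ℝ) (h : Collinear ℝ ({p, q, r} : Set (ℝ × ℝ))) :
    (q.1 - p.1) * (r.2 - p.2) = (r.1 - p.1) * (q.2 - p.2) := by
  rw [collinear_iff_of_mem (by simp : p ∈ ({p, q, r} : Set (ℝ × ℝ)))] at h
  obtain ⟨v, hv⟩ := h
  obtain ⟨s, hs⟩ := hv q (by simp)
  obtain ⟨u, hu⟩ := hv r (by simp)
  subst hs hu
  simp [Prod.fst_add, Prod.snd_add, Prod.smul_fst, Prod.smul_snd]
  ring

theorem stmt_4 (t : ℕ → ℝ) (ht : AlgebraicIndependent ℚ t)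
    (i j k l : ℕ) (hij : i ≠ j) (hik : i ≠ k) (hil : i ≠ l)
    (hjk : j ≠ k) (hjl : j ≠ l) (hkl : k ≠ l) :
    ¬ Collinear ℝ ({Ppt (t i) (t j), Ppt (t j) (t k), Ppt (t k) (t l)} : Set (ℝ × ℝ)) := by
  have hinj : Function.Injective t := ht.injective
  intro h
  have hd := collinear_det _ _ _ h
  simp only [Ppt] at hd
  set a := t i; set b := t j; set c := t k; set d := t l
  have hca : c ≠ a := fun e => hik (hinj e.symm)
  have hda : d ≠ a := fun e => hil (hinj e.symm)
  have hdb : d ≠ b := fun e => hjl (hinj e.symm)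
  have : (c - a) * (d - a) * (d - b) = 0 := by nlinarith [hd]
  rcases mul_eq_zero.1 this with h' | h'
  · rcases mul_eq_zero.1 h' with h'' | h''
    · exact hca (by linarith)
    · exact hda (by linarith)
  · exact hdb (by linarith)
end

section
/- Let (t_i)_{i∈ℕ} be a sequence of real numbers that is algebraically independent over ℚ, and for indices a, b set P_{a,b} = (t_a + t_b, t_a² + t_a t_b + t_b²) ∈ ℝ². Then for any five distinct indices i, j, k, ℓ, m, the three points P_{i,j}, P_{i,k}, P_{ℓ,m} are not collinear. -/
theorem stmt_5 (t : ℕ → ℝ) (ht : AlgebraicIndependent ℚ t)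
    (i j k l m : ℕ) (hij : i ≠ j) (hik : i ≠ k) (hil : i ≠ l) (him : i ≠ m)
    (hjk : j ≠ k) (hjl : j ≠ l) (hjm : j ≠ m) (hkl : k ≠ l) (hkm : k ≠ m)
    (hlm : l ≠ m) :
    ¬ Collinear ℝ ({Ppt (t i) (t j), Ppt (t i) (t k), Ppt (t l) (t m)} : Set (ℝ × ℝ)) := by
  intro hcol
  -- extract the determinant condition
  rw [collinear_iff_of_mem (Set.mem_insert _ _)] at hcol
  obtain ⟨v, hv⟩ := hcol
  obtain ⟨c2, hc2⟩ := hv (Ppt (t i) (t k)) (by simp)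
  obtain ⟨c3, hc3⟩ := hv (Ppt (t l) (t m)) (by simp)
  have h1 : (Ppt (t i) (t k)).1 - (Ppt (t i) (t j)).1 = c2 * v.1 := by
    rw [hc2]; simp [Prod.smul_def]
  have h2 : (Ppt (t i) (t k)).2 - (Ppt (t i) (t j)).2 = c2 * v.2 := by
    rw [hc2]; simp [Prod.smul_def]
  have h3 : (Ppt (t l) (t m)).1 - (Ppt (t i) (t j)).1 = c3 * v.1 := by
    rw [hc3]; simp [Prod.smul_def]
  have h4 : (Ppt (t l) (t m)).2 - (Ppt (t i) (t j)).2 = c3 * v.2 := by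
    rw [hc3]; simp [Prod.smul_def]
  have hdet : ((Ppt (t i) (t k)).1 - (Ppt (t i) (t j)).1) *
      ((Ppt (t l) (t m)).2 - (Ppt (t i) (t j)).2) -
      ((Ppt (t l) (t m)).1 - (Ppt (t i) (t j)).1) *
      ((Ppt (t i) (t k)).2 - (Ppt (t i) (t j)).2) = 0 := by
    rw [h1, h2, h3, h4]; ring
  simp only [Ppt] at hdet
  -- the determinant factors as (t k - t j) * Q
  have hQfac : (t k - t j) *
      (t l ^ 2 + t l * t m + t m ^ 2 + t i * t j + t i * t k + t j * t k
        - (t l + t m) * (t i + t j + t k)) = 0 := by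
    rw [← hdet]; ring
  have htinj : Function.Injective t := ht.injective
  have hkj : t k - t j ≠ 0 := sub_ne_zero.2 fun h => hjk (htinj h).symm
  have hQ : t l ^ 2 + t l * t m + t m ^ 2 + t i * t j + t i * t k + t j * t k
      - (t l + t m) * (t i + t j + t k) = 0 := by
    rcases mul_eq_zero.1 hQfac with h | h
    · exact absurd h hkj
    · exact h
  -- translate to a polynomial statement
  set p : MvPolynomial ℕ ℚ :=
    MvPolynomial.X l ^ 2 + MvPolynomial.X l * MvPolynomial.X m + MvPolynomial.X m ^ 2
      + MvPolynomial.X i * MvPolynomial.X j + MvPolynomial.X i * MvPolynomial.X k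
      + MvPolynomial.X j * MvPolynomial.X k
      - (MvPolynomial.X l + MvPolynomial.X m)
        * (MvPolynomial.X i + MvPolynomial.X j + MvPolynomial.X k) with hp
  have haeval : MvPolynomial.aeval t p = 0 := by
    simp only [hp, map_add, map_sub, map_mul, map_pow, MvPolynomial.aeval_X]
    exact hQ
  have hp0 : p = 0 := ht (by simpa using haeval)
  -- but p is nonzero: evaluate at the point sending l to 1 and everything else to 0
  have : MvPolynomial.eval (fun n => if n = l then (1 : ℚ) else 0) p = 1 := by
    simp only [hp, map_add, map_sub, map_mul, map_pow, MvPolynomial.eval_X]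
    simp [Ne.symm hlm, hil, hjl, hkl]
  rw [hp0] at this
  simp at this
end

section
/- Let (t_i)_{i∈ℕ} be a sequence of real numbers that is algebraically independent over ℚ, and for indices a, b set P_{a,b} = (t_a + t_b, t_a² + t_a t_b + t_b²) ∈ ℝ². Then for any six distinct indices i, j, k, ℓ, m, n, the three points P_{i,j}, P_{k,ℓ}, P_{m,n} are not collinear. -/
theorem stmt_6 (t : ℕ → ℝ) (ht : AlgebraicIndependent ℚ t)
    (i j k l m n : ℕ) (hij : i ≠ j) (hik : i ≠ k) (hil : i ≠ l) (him : i ≠ m)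
    (hin : i ≠ n) (hjk : j ≠ k) (hjl : j ≠ l) (hjm : j ≠ m) (hjn : j ≠ n)
    (hkl : k ≠ l) (hkm : k ≠ m) (hkn : k ≠ n) (hlm : l ≠ m) (hln : l ≠ n)
    (hmn : m ≠ n) :
    ¬ Collinear ℝ ({Ppt (t i) (t j), Ppt (t k) (t l), Ppt (t m) (t n)} : Set (ℝ × ℝ)) := by
  intro hcol
  obtain ⟨v, hv⟩ := (collinear_iff_of_mem (Set.mem_insert _ _)).1 hcol
  obtain ⟨r2, h2⟩ := hv (Ppt (t k) (t l)) (by simp)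
  obtain ⟨r3, h3⟩ := hv (Ppt (t m) (t n)) (by simp)
  rw [Prod.ext_iff] at h2 h3
  simp only [Ppt, vadd_eq_add, Prod.fst_add, Prod.snd_add, Prod.smul_fst,
    Prod.smul_snd, smul_eq_mul] at h2 h3
  have key : (t k + t l - (t i + t j)) *
      ((t m ^ 2 + t m * t n + t n ^ 2) - (t i ^ 2 + t i * t j + t j ^ 2)) -
      (t m + t n - (t i + t j)) *
      ((t k ^ 2 + t k * t l + t l ^ 2) - (t i ^ 2 + t i * t j + t j ^ 2)) = 0 := by
    obtain ⟨h2a, h2b⟩ := h2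
    obtain ⟨h3a, h3b⟩ := h3
    rw [h2a, h2b, h3a, h3b]; ring
  set X : ℕ → MvPolynomial ℕ ℚ := MvPolynomial.X with hX
  set D : MvPolynomial ℕ ℚ :=
    (X k + X l - (X i + X j)) *
      ((X m ^ 2 + X m * X n + X n ^ 2) - (X i ^ 2 + X i * X j + X j ^ 2)) -
    (X m + X n - (X i + X j)) *
      ((X k ^ 2 + X k * X l + X l ^ 2) - (X i ^ 2 + X i * X j + X j ^ 2)) with hD
  have haev : MvPolynomial.aeval t D = 0 := by
    rw [hD]
    simp only [map_sub, map_add, map_mul, map_pow, MvPolynomial.aeval_X, hX]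
    linear_combination key
  have hD0 : D = 0 := ht (by rw [haev, map_zero])
  set w : ℕ → ℚ := fun x => if x = m then 2 else if x = k then 1 else 0 with hw
  have wi : w i = 0 := by simp [hw, him, hik]
  have wj : w j = 0 := by simp [hw, hjm, hjk]
  have wk : w k = 1 := by simp [hw, hkm]
  have wl : w l = 0 := by simp [hw, hlm, hkl.symm]
  have wm : w m = 2 := by simp [hw]
  have wn : w n = 0 := by simp [hw, hmn.symm, hkn.symm]
  have hev : MvPolynomial.eval w D = 2 := by
    rw [hD]
    simp only [map_sub, map_add, map_mul, map_pow, MvPolynomial.eval_X, hX,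
      wi, wj, wk, wl, wm, wn]
    norm_num
  rw [hD0] at hev
  simp at hev
end

section
/- Let (t_i)_{i∈ℕ} be a sequence of real numbers that is algebraically independent over ℚ, and for indices a, b set P_{a,b} = (t_a + t_b, t_a² + t_a t_b + t_b²) ∈ ℝ². Then three points P_{e₁}, P_{e₂}, P_{e₃} indexed by three distinct unordered pairs e₁, e₂, e₃ of natural numbers are collinear if and only if e₁, e₂, e₃ form a triangle, i.e., e₁ = {i,j}, e₂ = {j,k}, e₃ = {i,k} for some three distinct indices i, j, k. -/
section Plane

variable {R : Type*} [CommRing R]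

def pairPoint (x y : R) : R × R := (x + y, x ^ 2 + x * y + y ^ 2)

/-- Twice the signed area of the triangle `p₁ p₂ p₃`. -/
def areaDet (p₁ p₂ p₃ : R × R) : R :=
  (p₂.1 - p₁.1) * (p₃.2 - p₁.2) - (p₃.1 - p₁.1) * (p₂.2 - p₁.2)

theorem pairPoint_comm (x y : R) : pairPoint x y = pairPoint y x := by
  simp only [pairPoint]; congr 1 <;> ring

theorem pairPoint_congr {α : Type*} [DecidableEq α] (u : α → R) {a b c d : α}
    (h : ({a, b} : Finset α) = {c, d}) : pairPoint (u a) (u b) = pairPoint (u c) (u d) := by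
  have h' := congrArg (fun s : Finset α => (s : Set α)) h
  simp only [Finset.coe_pair] at h'
  rcases Set.pair_eq_pair_iff.1 h' with ⟨rfl, rfl⟩ | ⟨rfl, rfl⟩
  · rfl
  · exact pairPoint_comm _ _

theorem areaDet_rotate (p₁ p₂ p₃ : R × R) : areaDet p₂ p₃ p₁ = areaDet p₁ p₂ p₃ := by
  simp only [areaDet]; ring

theorem areaDet_swap (p₁ p₂ p₃ : R × R) : areaDet p₁ p₃ p₂ = -areaDet p₁ p₂ p₃ := by
  simp only [areaDet]; ring

theorem MvPolynomial.aeval_areaDet_pairPoint {σ B : Type*} [CommRing B] [Algebra R B]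
    (u : σ → B) (a b c d e f : σ) :
    aeval u (areaDet (pairPoint (X a) (X b)) (pairPoint (X c) (X d)) (pairPoint (X e) (X f)) :
      MvPolynomial σ R) =
      areaDet (pairPoint (u a) (u b)) (pairPoint (u c) (u d)) (pairPoint (u e) (u f)) := by
  simp [areaDet, pairPoint]

end Plane

section Collinear

variable {k : Type*} [Field k]

theorem Collinear.areaDet_eq_zero {p₁ p₂ p₃ : k × k} (h : Collinear k {p₁, p₂, p₃}) :
    areaDet p₁ p₂ p₃ = 0 := by
  obtain ⟨p₀, v, hv⟩ := (collinear_iff_exists_forall_eq_smul_vadd _).1 h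
  obtain ⟨r₁, rfl⟩ := hv p₁ (by simp)
  obtain ⟨r₂, rfl⟩ := hv p₂ (by simp)
  obtain ⟨r₃, rfl⟩ := hv p₃ (by simp)
  simp only [areaDet, vadd_eq_add, Prod.fst_add, Prod.snd_add, Prod.smul_fst, Prod.smul_snd,
    smul_eq_mul]
  ring

theorem collinear_of_forall_snd_eq {s : Set (k × k)} (m c : k)
    (hs : ∀ p ∈ s, p.2 = m * p.1 + c) : Collinear k s := by
  refine (collinear_iff_exists_forall_eq_smul_vadd _).2 ⟨(0, c), (1, m), fun p hp => ⟨p.1, ?_⟩⟩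
  ext <;> simp [hs p hp]; ring

theorem collinear_pairPoint_triangle (x y z : k) :
    Collinear k {pairPoint x y, pairPoint y z, pairPoint x z} := by
  refine collinear_of_forall_snd_eq (x + y + z) (-(x * y + y * z + z * x)) fun p hp => ?_
  rcases hp with rfl | rfl | rfl <;> simp only [pairPoint] <;> ring

end Collinear

theorem AlgebraicIndependent.aeval_eq_zero_of_aeval_eq_zero {ι R A B : Type*} [CommRing R]
    [CommRing A] [CommRing B] [Algebra R A] [Algebra R B] {t : ι → A}
    (ht : AlgebraicIndependent R t) {p : MvPolynomial ι R} (hp : MvPolynomial.aeval t p = 0)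
    (u : ι → B) : MvPolynomial.aeval u p = 0 := by
  rw [ht.eq_zero_of_aeval_eq_zero p hp, map_zero]

section Pairs

variable {α : Type*} [DecidableEq α]

theorem Finset.exists_pair_eq_of_mem {a b v : α} (hab : a ≠ b) (hv : v ∈ ({a, b} : Finset α)) :
    ∃ p, v ≠ p ∧ ({a, b} : Finset α) = {v, p} := by
  simp only [Finset.mem_insert, Finset.mem_singleton] at hv
  rcases hv with rfl | rfl
  · exact ⟨b, hab, rfl⟩
  · exact ⟨a, hab.symm, Finset.pair_comm _ _⟩

theorem Finset.pair_eq_of_mem_of_mem {a b x y : α} (hxy : x ≠ y) (hx : x ∈ ({a, b} : Finset α))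
    (hy : y ∈ ({a, b} : Finset α)) : ({x, y} : Finset α) = {a, b} :=
  Finset.eq_of_subset_of_card_le (by simp [Finset.insert_subset_iff, hx, hy])
    (by simpa [Finset.card_pair hxy] using Finset.card_le_two)

theorem exists_triangle_of_not_disjoint {a b c d e f : α} (hab : a ≠ b) (hcd : c ≠ d)
    (h12 : ({a, b} : Finset α) ≠ {c, d})
    (k12 : ¬Disjoint ({a, b} : Finset α) {c, d}) (k13 : ¬Disjoint ({a, b} : Finset α) {e, f})
    (k23 : ¬Disjoint ({c, d} : Finset α) {e, f})
    (hstar : ∀ v ∈ ({a, b} : Finset α), v ∈ ({c, d} : Finset α) → v ∉ ({e, f} : Finset α)) :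
    ∃ i j k : α, i ≠ j ∧ j ≠ k ∧ i ≠ k ∧
      ({a, b} : Finset α) = {i, j} ∧ ({c, d} : Finset α) = {j, k} ∧
      ({e, f} : Finset α) = {i, k} := by
  obtain ⟨j, hj₁, hj₂⟩ := Finset.not_disjoint_iff.1 k12
  have hj₃ := hstar j hj₁ hj₂
  obtain ⟨i, hji, hi⟩ := Finset.exists_pair_eq_of_mem hab hj₁
  obtain ⟨k, hjk, hk⟩ := Finset.exists_pair_eq_of_mem hcd hj₂
  have hik : i ≠ k := by rintro rfl; exact h12 (hi.trans hk.symm)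
  have mem_of_not_disjoint : ∀ x, ¬Disjoint ({j, x} : Finset α) {e, f} → x ∈ ({e, f} : Finset α) :=
    fun x hx => by
      obtain ⟨y, hy, hyef⟩ := Finset.not_disjoint_iff.1 hx
      simp only [Finset.mem_insert, Finset.mem_singleton] at hy
      rcases hy with rfl | rfl
      · exact absurd hyef hj₃
      · exact hyef
  have hi₃ := mem_of_not_disjoint i (hi ▸ k13)
  have hk₃ := mem_of_not_disjoint k (hk ▸ k23)
  exact ⟨i, j, k, hji.symm, hjk, hik, hi.trans (Finset.pair_comm _ _), hk,
    (Finset.pair_eq_of_mem_of_mem hik hi₃ hk₃).symm⟩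

end Pairs

section

variable {α : Type*}

def IdenticallyCollinear (a b c d e f : α) : Prop :=
  ∀ u : α → ℚ, areaDet (pairPoint (u a) (u b)) (pairPoint (u c) (u d)) (pairPoint (u e) (u f)) = 0

theorem AlgebraicIndependent.identicallyCollinear {A : Type*} [CommRing A] [Algebra ℚ A]
    {t : α → A} (ht : AlgebraicIndependent ℚ t) {a b c d e f : α}
    (h : areaDet (pairPoint (t a) (t b)) (pairPoint (t c) (t d)) (pairPoint (t e) (t f)) = 0) :
    IdenticallyCollinear a b c d e f := fun u => by
  rw [← MvPolynomial.aeval_areaDet_pairPoint (R := ℚ)]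
  exact ht.aeval_eq_zero_of_aeval_eq_zero (by rwa [MvPolynomial.aeval_areaDet_pairPoint]) u

namespace IdenticallyCollinear

variable {a b c d e f : α}

theorem rotate (H : IdenticallyCollinear a b c d e f) : IdenticallyCollinear c d e f a b :=
  fun u => (areaDet_rotate _ _ _).trans (H u)

theorem swap (H : IdenticallyCollinear a b c d e f) : IdenticallyCollinear a b e f c d :=
  fun u => by rw [areaDet_swap, H u, neg_zero]

variable [DecidableEq α]

theorem not_disjoint (H : IdenticallyCollinear a b c d e f)
    (hab : a ≠ b) (hef : e ≠ f) (h13 : ({a, b} : Finset α) ≠ {e, f})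
    (h23 : ({c, d} : Finset α) ≠ {e, f}) : ¬Disjoint ({a, b} : Finset α) {c, d} := by
  intro hdisj
  set s : Finset α := {c, d}
  -- the line through `(0, 1)` and `(4, 12)` contains no other `pairPoint x y` with
  -- `x, y ∈ {1, -1, 2, 0}`
  set u : α → ℚ := fun n => if n = a then 1 else if n = b then -1 else if n ∈ s then 2 else 0
  have hu : ∀ n, (n = a ∧ u n = 1) ∨ (n = b ∧ u n = -1) ∨ (n ∈ s ∧ u n = 2) ∨ u n = 0 := by
    intro n
    by_cases ha : n = a
    · simp [u, ha]
    by_cases hb : n = b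
    · simp [u, hb, hab.symm]
    by_cases hs : n ∈ s <;> simp [u, ha, hb, hs]
  have hs : ∀ n ∈ s, u n = 2 := fun n hn => by
    have : n ∉ ({a, b} : Finset α) := Finset.disjoint_right.1 hdisj hn
    simp_all [u]
  have key := H u
  rw [hs c (by simp [s]), hs d (by simp [s]), show u a = 1 by simp [u],
    show u b = -1 by simp [u, hab.symm]] at key
  rcases hu e with ⟨he', he⟩ | ⟨he', he⟩ | ⟨he', he⟩ | he <;>
    rcases hu f with ⟨hf', hf⟩ | ⟨hf', hf⟩ | ⟨hf', hf⟩ | hf <;>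
    rw [he, hf] at key <;> norm_num [areaDet, pairPoint] at key
  · exact h13 (by rw [he', hf'])
  · exact h13 (by rw [he', hf', Finset.pair_comm])
  · exact h23 (Finset.pair_eq_of_mem_of_mem hef he' hf').symm

theorem not_mem_of_mem (H : IdenticallyCollinear a b c d e f)
    (hab : a ≠ b) (hcd : c ≠ d) (hef : e ≠ f) (h12 : ({a, b} : Finset α) ≠ {c, d})
    (h13 : ({a, b} : Finset α) ≠ {e, f}) (h23 : ({c, d} : Finset α) ≠ {e, f}) {v : α}
    (hv₁ : v ∈ ({a, b} : Finset α)) (hv₂ : v ∈ ({c, d} : Finset α)) :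
    v ∉ ({e, f} : Finset α) := by
  intro hv₃
  obtain ⟨p, hvp, hp⟩ := Finset.exists_pair_eq_of_mem hab hv₁
  obtain ⟨q, hvq, hq⟩ := Finset.exists_pair_eq_of_mem hcd hv₂
  obtain ⟨r, hvr, hr⟩ := Finset.exists_pair_eq_of_mem hef hv₃
  have hpq : p ≠ q := by rintro rfl; exact h12 (hp.trans hq.symm)
  have hpr : p ≠ r := by rintro rfl; exact h13 (hp.trans hr.symm)
  have hqr : q ≠ r := by rintro rfl; exact h23 (hq.trans hr.symm)
  -- `u` sends the star to `(1, 1)`, `(2, 4)`, `(3, 9)`, three points of a parabola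
  set u : α → ℚ := fun n => if n = p then 1 else if n = q then 2 else if n = r then 3 else 0
  have key := H u
  rw [pairPoint_congr u hp, pairPoint_congr u hq, pairPoint_congr u hr] at key
  norm_num [u, hvp, hvq, hvr, hpq.symm, hpr.symm, hqr.symm, areaDet, pairPoint] at key

theorem exists_triangle (H : IdenticallyCollinear a b c d e f)
    (hab : a ≠ b) (hcd : c ≠ d) (hef : e ≠ f) (h12 : ({a, b} : Finset α) ≠ {c, d})
    (h13 : ({a, b} : Finset α) ≠ {e, f}) (h23 : ({c, d} : Finset α) ≠ {e, f}) :
    ∃ i j k : α, i ≠ j ∧ j ≠ k ∧ i ≠ k ∧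
      ({a, b} : Finset α) = {i, j} ∧ ({c, d} : Finset α) = {j, k} ∧
      ({e, f} : Finset α) = {i, k} :=
  exists_triangle_of_not_disjoint hab hcd h12 (H.not_disjoint hab hef h13 h23)
    (H.swap.not_disjoint hab hcd h12 h23.symm) (H.rotate.not_disjoint hcd hab h12.symm h13.symm)
    fun _ hv₁ hv₂ => H.not_mem_of_mem hab hcd hef h12 h13 h23 hv₁ hv₂

end IdenticallyCollinear

end

theorem stmt_7 (t : ℕ → ℝ) (ht : AlgebraicIndependent ℚ t)
    (a b c d e f : ℕ) (hab : a ≠ b) (hcd : c ≠ d) (hef : e ≠ f)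
    (h12 : ({a, b} : Finset ℕ) ≠ {c, d})
    (h13 : ({a, b} : Finset ℕ) ≠ {e, f})
    (h23 : ({c, d} : Finset ℕ) ≠ {e, f}) :
    Collinear ℝ ({Ppt (t a) (t b), Ppt (t c) (t d), Ppt (t e) (t f)} : Set (ℝ × ℝ)) ↔
      ∃ i j k : ℕ, i ≠ j ∧ j ≠ k ∧ i ≠ k ∧
        ({a, b} : Finset ℕ) = {i, j} ∧
        ({c, d} : Finset ℕ) = {j, k} ∧
        ({e, f} : Finset ℕ) = {i, k} := by
  change Collinear ℝ {pairPoint (t a) (t b), pairPoint (t c) (t d), pairPoint (t e) (t f)} ↔ _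
  constructor
  · intro hcol
    exact (ht.identicallyCollinear hcol.areaDet_eq_zero).exists_triangle hab hcd hef h12 h13 h23
  · rintro ⟨i, j, k, -, -, -, hij, hjk, hik⟩
    rw [pairPoint_congr t hij, pairPoint_congr t hjk, pairPoint_congr t hik]
    exact collinear_pairPoint_triangle _ _ _
end

section
/- Let (t_i)_{i∈ℕ} be a sequence of real numbers that is algebraically independent over ℚ, let A ⊆ ℝ² be the set of all points P_{a,b} = (t_a + t_b, t_a² + t_a t_b + t_b²) over unordered pairs {a,b} of distinct naturals, and let P be any finite subset of A. Then there exists a subset P' ⊆ P with |P'| ≥ |P|/2 such that no three points of P' are collinear. -/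
/-- A set of points in the plane has no three collinear points. -/
def NoThreeCollinear (S : Set (ℝ × ℝ)) : Prop :=
  ∀ p ∈ S, ∀ q ∈ S, ∀ r ∈ S, p ≠ q → p ≠ r → q ≠ r →
    ¬ Collinear ℝ ({p, q, r} : Set (ℝ × ℝ))

lemma det_of_collinear (p q r : ℝ × ℝ) (h : Collinear ℝ ({p, q, r} : Set (ℝ × ℝ))) :
    (q.1 - p.1) * (r.2 - p.2) - (r.1 - p.1) * (q.2 - p.2) = 0 := by
  rw [collinear_iff_of_mem (Set.mem_insert p _)] at h
  obtain ⟨v, hv⟩ := h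
  obtain ⟨rq, hq⟩ := hv q (by simp)
  obtain ⟨rr, hr⟩ := hv r (by simp)
  rw [hq, hr]
  simp only [vadd_eq_add, Prod.fst_add, Prod.snd_add, Prod.smul_fst, Prod.smul_snd,
    smul_eq_mul]
  ring

open MvPolynomial in
lemma core (t : ℕ → ℝ) (ht : AlgebraicIndependent ℚ t) (v b c d e f : ℕ)
    (hvb : v ≠ b) (hvc : v ≠ c) (hvd : v ≠ d) (hve : v ≠ e) (hvf : v ≠ f)
    (hdc : d ≠ c) (hec : e ≠ c) (hfc : f ≠ c)
    (hcol : Collinear ℝ ({Ppt (t v) (t b), Ppt (t c) (t d), Ppt (t e) (t f)} : Set (ℝ × ℝ))) :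
    False := by
  have det := det_of_collinear _ _ _ hcol
  simp only [Ppt] at det
  have hp : (aeval t)
      ((X c + X d - (X v + X b)) *
        ((X e)^2 + X e * X f + (X f)^2 - ((X v)^2 + X v * X b + (X b)^2)) -
       (X e + X f - (X v + X b)) *
        ((X c)^2 + X c * X d + (X d)^2 - ((X v)^2 + X v * X b + (X b)^2)) :
        MvPolynomial ℕ ℚ) = 0 := by
    simp only [map_add, map_sub, map_mul, map_pow, aeval_X]
    linear_combination det
  have hp0 : ((X c + X d - (X v + X b)) *
        ((X e)^2 + X e * X f + (X f)^2 - ((X v)^2 + X v * X b + (X b)^2)) -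
       (X e + X f - (X v + X b)) *
        ((X c)^2 + X c * X d + (X d)^2 - ((X v)^2 + X v * X b + (X b)^2)) :
        MvPolynomial ℕ ℚ) = 0 := by
    apply algebraicIndependent_iff_injective_aeval.mp ht
    rw [hp, map_zero]
  have H : ∀ σ : ℕ → ℚ,
      (σ c + σ d - (σ v + σ b)) *
        ((σ e)^2 + σ e * σ f + (σ f)^2 - ((σ v)^2 + σ v * σ b + (σ b)^2)) -
      (σ e + σ f - (σ v + σ b)) *
        ((σ c)^2 + σ c * σ d + (σ d)^2 - ((σ v)^2 + σ v * σ b + (σ b)^2)) = 0 := by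
    intro σ
    have h2 := congrArg (eval σ) hp0
    simpa only [map_add, map_sub, map_mul, map_pow, eval_X, map_zero] using h2
  have key : ∀ T : ℚ,
      ((1:ℚ) + 0 - (T + (if b = c then (1:ℚ) else 0))) *
        (0^2 + 0*0 + 0^2 - (T^2 + T*(if b = c then (1:ℚ) else 0) + (if b = c then (1:ℚ) else 0)^2)) -
      (0 + 0 - (T + (if b = c then (1:ℚ) else 0))) *
        (1^2 + 1*0 + 0^2 - (T^2 + T*(if b = c then (1:ℚ) else 0) + (if b = c then (1:ℚ) else 0)^2)) = 0 := by
    intro T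
    have h3 := H (fun n => if n = v then T else if n = c then 1 else 0)
    simp only [if_neg (Ne.symm hvb), if_neg (Ne.symm hvc), if_neg (Ne.symm hvd),
      if_neg (Ne.symm hve), if_neg (Ne.symm hvf), if_neg hdc, if_neg hec, if_neg hfc,
      if_pos rfl] at h3
    exact h3
  by_cases hbc : b = c
  · have k0 := key 0; have k1 := key 1; have k2 := key 2
    simp only [if_pos hbc] at k0 k1 k2
    have : (-2:ℚ) = 0 := by linear_combination k0 - 2*k1 + k2
    norm_num at this
  · have k0 := key 0; have k1 := key 1; have k2 := key 2
    simp only [if_neg hbc] at k0 k1 k2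
    have : (-2:ℚ) = 0 := by linear_combination k0 - 2*k1 + k2
    norm_num at this

def pairEq (a b c d : ℕ) : Prop := (a = c ∧ b = d) ∨ (a = d ∧ b = c)

lemma ppt_comm (x y : ℝ) : Ppt x y = Ppt y x := by
  unfold Ppt; rw [Prod.ext_iff]; constructor <;> dsimp <;> ring


lemma core' (t : ℕ → ℝ) (ht : AlgebraicIndependent ℚ t) (v b c d e f : ℕ)
    (hvb : v ≠ b) (hvc : v ≠ c) (hvd : v ≠ d) (hve : v ≠ e) (hvf : v ≠ f)
    (hcd : c ≠ d) (h23 : ¬ pairEq c d e f)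
    (hcol : Collinear ℝ ({Ppt (t v) (t b), Ppt (t c) (t d), Ppt (t e) (t f)} : Set (ℝ × ℝ))) :
    False := by
  unfold pairEq at h23
  by_cases h : c = e ∨ c = f
  · have hcol' : Collinear ℝ ({Ppt (t v) (t b), Ppt (t d) (t c), Ppt (t e) (t f)} : Set (ℝ × ℝ)) := by
      rw [ppt_comm (t d) (t c)]; exact hcol
    exact core t ht v b d c e f hvb hvd hvc hve hvf hcd (by omega) (by omega) hcol'
  · push_neg at h
    exact core t ht v b c d e f hvb hvc hvd hve hvf (Ne.symm hcd) (Ne.symm h.1) (Ne.symm h.2) hcol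

lemma else_core (a b c d e f : ℕ) (hab : a ≠ b) (hcd : c ≠ d) (hef : e ≠ f)
    (h12 : ¬ pairEq a b c d)
    (ha2 : a = c ∨ a = d) (hb3 : b = e ∨ b = f)
    (hc : c = a ∨ c = b ∨ c = e ∨ c = f)
    (hd : d = a ∨ d = b ∨ d = e ∨ d = f) :
    ∃ z, z ≠ a ∧ z ≠ b ∧ pairEq c d a z ∧ pairEq e f b z := by
  unfold pairEq at *
  rcases ha2 with h | h
  · exact ⟨d, by omega, by omega, by omega, by omega⟩
  · exact ⟨c, by omega, by omega, by omega, by omega⟩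

lemma key_lemma (a b c d e f : ℕ) (hab : a ≠ b)
    (hA : a = c ∨ a = d ∨ a = e ∨ a = f) (hB : b = c ∨ b = d ∨ b = e ∨ b = f)
    (h12 : ¬((a = c ∧ b = d) ∨ (a = d ∧ b = c)))
    (h13 : ¬((a = e ∧ b = f) ∨ (a = f ∧ b = e))) :
    ((a = c ∨ a = d) ∧ (b = e ∨ b = f)) ∨ ((a = e ∨ a = f) ∧ (b = c ∨ b = d)) := by
  rcases hA with h | h | h | h <;> rcases hB with h' | h' | h' | h' <;>
    subst h <;> subst h' <;> tauto

lemma collinear_tri (t : ℕ → ℝ) (ht : AlgebraicIndependent ℚ t) (a b c d e f : ℕ)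
    (hab : a ≠ b) (hcd : c ≠ d) (hef : e ≠ f)
    (h12 : ¬ pairEq a b c d) (h13 : ¬ pairEq a b e f) (h23 : ¬ pairEq c d e f)
    (hcol : Collinear ℝ ({Ppt (t a) (t b), Ppt (t c) (t d), Ppt (t e) (t f)} : Set (ℝ × ℝ))) :
    ∃ x y z : ℕ, x ≠ y ∧ x ≠ z ∧ y ≠ z ∧ pairEq a b x y ∧ pairEq c d x z ∧ pairEq e f y z := by
  by_cases hA : ¬(a = c ∨ a = d ∨ a = e ∨ a = f)
  · push_neg at hA
    exfalso
    exact core' t ht a b c d e f hab hA.1 hA.2.1 hA.2.2.1 hA.2.2.2 hcd h23 hcol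
  by_cases hB : ¬(b = c ∨ b = d ∨ b = e ∨ b = f)
  · push_neg at hB
    exfalso
    rw [ppt_comm (t a) (t b)] at hcol
    exact core' t ht b a c d e f (Ne.symm hab) hB.1 hB.2.1 hB.2.2.1 hB.2.2.2 hcd h23 hcol
  by_cases hC : ¬(c = a ∨ c = b ∨ c = e ∨ c = f)
  · push_neg at hC
    exfalso
    rw [Set.insert_comm] at hcol
    exact core' t ht c d a b e f hcd hC.1 hC.2.1 hC.2.2.1 hC.2.2.2 hab h13 hcol
  by_cases hD : ¬(d = a ∨ d = b ∨ d = e ∨ d = f)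
  · push_neg at hD
    exfalso
    rw [Set.insert_comm, ppt_comm (t c) (t d)] at hcol
    exact core' t ht d c a b e f (Ne.symm hcd) hD.1 hD.2.1 hD.2.2.1 hD.2.2.2 hab h13 hcol
  by_cases hE : ¬(e = a ∨ e = b ∨ e = c ∨ e = d)
  · push_neg at hE
    exfalso
    rw [Set.pair_comm, Set.insert_comm] at hcol
    exact core' t ht e f a b c d hef hE.1 hE.2.1 hE.2.2.1 hE.2.2.2 hab h12 hcol
  by_cases hF : ¬(f = a ∨ f = b ∨ f = c ∨ f = d)
  · push_neg at hF
    exfalso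
    rw [Set.pair_comm, Set.insert_comm, ppt_comm (t e) (t f)] at hcol
    exact core' t ht f e a b c d (Ne.symm hef) hF.1 hF.2.1 hF.2.2.1 hF.2.2.2 hab h12 hcol
  rw [not_not] at hA hB hC hD hE hF
  unfold pairEq at h12 h13
  have key := key_lemma a b c d e f hab hA hB h12 h13
  rcases key with ⟨ha2, hb3⟩ | ⟨ha3, hb2⟩
  · obtain ⟨z, hza, hzb, hp2, hp3⟩ :=
      else_core a b c d e f hab hcd hef h12 ha2 hb3 hC hD
    exact ⟨a, b, z, hab, Ne.symm hza, Ne.symm hzb, Or.inl ⟨rfl, rfl⟩, hp2, hp3⟩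
  · obtain ⟨z, hza, hzb, hp2, hp3⟩ :=
      else_core a b e f c d hab hef hcd h13 ha3 hb2 hE hF
    exact ⟨b, a, z, Ne.symm hab, Ne.symm hzb, Ne.symm hza, Or.inr ⟨rfl, rfl⟩, hp3, hp2⟩

lemma maxcut (V : Finset ℕ) : ∀ (E : Finset (ℕ × ℕ)),
    (∀ e ∈ E, e.1 ∈ V ∧ e.2 ∈ V ∧ e.1 ≠ e.2) →
    ∃ χ : ℕ → Bool, E.card ≤ 2 * (E.filter fun e => χ e.1 ≠ χ e.2).card := by
  classical
  induction V using Finset.induction_on with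
  | empty =>
    intro E hE
    have : E = ∅ := by
      rw [Finset.eq_empty_iff_forall_notMem]
      intro e he
      exact absurd (hE e he).1 (Finset.notMem_empty _)
    subst this
    exact ⟨fun _ => true, by simp⟩
  | @insert v V hv ih =>
    intro E hE
    set p : ℕ × ℕ → Prop := fun e => e.1 = v ∨ e.2 = v with hp
    set E0 : Finset (ℕ × ℕ) := E.filter (fun e => ¬ p e) with hE0
    set E1 : Finset (ℕ × ℕ) := E.filter p with hE1
    have hE0V : ∀ e ∈ E0, e.1 ∈ V ∧ e.2 ∈ V ∧ e.1 ≠ e.2 := by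
      intro e he
      rw [hE0, Finset.mem_filter] at he
      obtain ⟨heE, hnp⟩ := he
      obtain ⟨h1, h2, h3⟩ := hE e heE
      simp only [hp] at hnp
      push_neg at hnp
      rw [Finset.mem_insert] at h1 h2
      exact ⟨h1.resolve_left hnp.1, h2.resolve_left hnp.2, h3⟩
    obtain ⟨χ, hχ⟩ := ih E0 hE0V
    set r : ℕ × ℕ → Bool := fun e => χ (if e.1 = v then e.2 else e.1) with hr
    set bb : Bool :=
      if (E1.filter fun e => r e = true).card ≤ (E1.filter fun e => ¬ (r e = true)).card
        then true else false with hbb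
    set χ' : ℕ → Bool := Function.update χ v bb with hχ'
    refine ⟨χ', ?_⟩
    have hagree : ∀ n : ℕ, n ≠ v → χ' n = χ n := by
      intro n hn; rw [hχ', Function.update_of_ne hn]
    have hχ'v : χ' v = bb := by rw [hχ']; simp
    set q : ℕ × ℕ → Prop := fun e => χ' e.1 ≠ χ' e.2 with hq
    have hsplit : (E.filter q).card = (E1.filter q).card + (E0.filter q).card := by
      rw [hE1, hE0, Finset.filter_comm, Finset.filter_comm (fun e => ¬ p e) q E]
      exact (Finset.card_filter_add_card_filter_not (s := E.filter q) p).symm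
    have hcard : E1.card + E0.card = E.card :=
      Finset.card_filter_add_card_filter_not (s := E) p
    have h0 : (E0.filter q).card = (E0.filter fun e => χ e.1 ≠ χ e.2).card := by
      apply congrArg
      apply Finset.filter_congr
      intro e he
      have hm := hE0V e he
      show χ' e.1 ≠ χ' e.2 ↔ χ e.1 ≠ χ e.2
      rw [hagree e.1 (by rintro rfl; exact hv hm.1), hagree e.2 (by rintro rfl; exact hv hm.2.1)]
    have h1 : (E1.filter q) = (E1.filter fun e => r e ≠ bb) := by
      apply Finset.filter_congr
      intro e he
      rw [hE1, Finset.mem_filter] at he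
      obtain ⟨heE, hpe⟩ := he
      have hne := (hE e heE).2.2
      show χ' e.1 ≠ χ' e.2 ↔ ¬(χ (if e.1 = v then e.2 else e.1) = bb)
      rcases hpe with h | h
      · rw [if_pos h, h, hχ'v, hagree e.2 (by rw [← h]; exact hne.symm)]
        exact ⟨fun hh => Ne.symm hh, fun hh => Ne.symm hh⟩
      · have h1v : e.1 ≠ v := by rintro rfl; exact hne h.symm
        rw [if_neg h1v, h, hχ'v, hagree e.1 h1v]
    have hsum2 : (E1.filter fun e => r e = true).card + (E1.filter fun e => r e = false).card
        = E1.card := by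
      have heq2 : (E1.filter fun e => ¬ (r e = true)) = (E1.filter fun e => r e = false) := by
        apply Finset.filter_congr
        intro e _
        simp
      rw [← heq2]
      exact Finset.card_filter_add_card_filter_not (fun e => r e = true)
    have h1c : E1.card ≤ 2 * (E1.filter fun e => r e ≠ bb).card := by
      rw [hbb]
      split
      · rename_i hle
        have heq : (E1.filter fun e => r e ≠ true) = (E1.filter fun e => r e = false) := by
          apply Finset.filter_congr
          intro e _
          simp
        rw [heq]
        have hle2 : (E1.filter fun e => r e = true).card ≤ (E1.filter fun e => r e = false).card := by
          have heq2 : (E1.filter fun e => ¬ (r e = true)) = (E1.filter fun e => r e = false) := by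
            apply Finset.filter_congr
            intro e _
            simp
          rw [← heq2]
          exact hle
        omega
      · rename_i hgt
        have heq : (E1.filter fun e => r e ≠ false) = (E1.filter fun e => r e = true) := by
          apply Finset.filter_congr
          intro e _
          simp
        rw [heq]
        have hgt2 : ¬ (E1.filter fun e => r e = true).card ≤ (E1.filter fun e => r e = false).card := by
          have heq2 : (E1.filter fun e => ¬ (r e = true)) = (E1.filter fun e => r e = false) := by
            apply Finset.filter_congr
            intro e _
            simp
          rw [← heq2]
          exact hgt
        omega
    have hfinal : (E.filter fun e => χ' e.1 ≠ χ' e.2) = E.filter q := by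
      apply Finset.filter_congr
      intro e _
      rw [hq]
    rw [hfinal]
    have h1' := congrArg Finset.card h1
    omega


theorem stmt_9 (t : ℕ → ℝ) (ht : AlgebraicIndependent ℚ t)
    (A : Set (ℝ × ℝ))
    (hA : A = {p : ℝ × ℝ | ∃ a b : ℕ, a ≠ b ∧ p = Ppt (t a) (t b)})
    (P : Finset (ℝ × ℝ)) (hP : ↑P ⊆ A) :
    ∃ P' : Finset (ℝ × ℝ), P' ⊆ P ∧ (P.card : ℝ) / 2 ≤ (P'.card : ℝ) ∧
      NoThreeCollinear ↑P' := by
  classical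
  have hch : ∀ p ∈ P, ∃ ab : ℕ × ℕ, ab.1 < ab.2 ∧ p = Ppt (t ab.1) (t ab.2) := by
    intro p hp'
    have hmem := hP hp'
    rw [hA] at hmem
    obtain ⟨a, b, hab, rfl⟩ := hmem
    rcases Nat.lt_or_ge a b with h | h
    · exact ⟨(a, b), h, rfl⟩
    · exact ⟨(b, a), lt_of_le_of_ne h (Ne.symm hab), ppt_comm _ _⟩
  set g : (ℝ × ℝ) → ℕ × ℕ := fun p =>
    if h : ∃ ab : ℕ × ℕ, ab.1 < ab.2 ∧ p = Ppt (t ab.1) (t ab.2) then h.choose else (0, 1)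
    with hg
  have hgspec : ∀ p ∈ P, (g p).1 < (g p).2 ∧ p = Ppt (t (g p).1) (t (g p).2) := by
    intro p hp'
    have hex := hch p hp'
    rw [hg]
    simp only [dif_pos hex]
    exact hex.choose_spec
  have hginj : ∀ p ∈ P, ∀ q ∈ P, g p = g q → p = q := by
    intro p hp' q hq' h
    rw [(hgspec p hp').2, (hgspec q hq').2, h]
  set E : Finset (ℕ × ℕ) := P.image g with hE
  set V : Finset ℕ := E.image Prod.fst ∪ E.image Prod.snd with hV
  have hEV : ∀ e ∈ E, e.1 ∈ V ∧ e.2 ∈ V ∧ e.1 ≠ e.2 := by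
    intro e he
    refine ⟨?_, ?_, ?_⟩
    · rw [hV]; exact Finset.mem_union_left _ (Finset.mem_image_of_mem _ he)
    · rw [hV]; exact Finset.mem_union_right _ (Finset.mem_image_of_mem _ he)
    · rw [hE] at he
      obtain ⟨p, hp', rfl⟩ := Finset.mem_image.mp he
      exact Nat.ne_of_lt (hgspec p hp').1
  obtain ⟨χ, hχ⟩ := maxcut V E hEV
  set P' : Finset (ℝ × ℝ) := P.filter (fun p => χ (g p).1 ≠ χ (g p).2) with hP'
  have hcardE : E.card = P.card := Finset.card_image_of_injOn (fun p hp2 q hq2 => hginj p hp2 q hq2)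
  have hfilterim : E.filter (fun e => χ e.1 ≠ χ e.2) = P'.image g := by
    rw [hE, Finset.filter_image, hP']
  have hcardP' : (E.filter (fun e => χ e.1 ≠ χ e.2)).card = P'.card := by
    rw [hfilterim]
    exact Finset.card_image_of_injOn
      (fun p hp2 q hq2 => hginj p (Finset.filter_subset _ _ hp2) q (Finset.filter_subset _ _ hq2))
  refine ⟨P', Finset.filter_subset _ _, ?_, ?_⟩
  · have hle : P.card ≤ 2 * P'.card := by rw [← hcardP']; rw [← hcardE]; exact hχ
    rw [div_le_iff₀ (by norm_num : (0:ℝ) < 2)]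
    exact_mod_cast (by omega : P.card ≤ P'.card * 2)
  · intro p hpm q hqm r hrm hpq hpr hqr hcol
    have hpf := Finset.mem_coe.mp hpm
    have hqf := Finset.mem_coe.mp hqm
    have hrf := Finset.mem_coe.mp hrm
    rw [hP', Finset.mem_filter] at hpf hqf hrf
    obtain ⟨hpP, hpχ⟩ := hpf
    obtain ⟨hqP, hqχ⟩ := hqf
    obtain ⟨hrP, hrχ⟩ := hrf
    have hps := hgspec p hpP
    have hqs := hgspec q hqP
    have hrs := hgspec r hrP
    have hne12 : ¬ pairEq (g p).1 (g p).2 (g q).1 (g q).2 := by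
      have hgg : ¬ ((g p).1 = (g q).1 ∧ (g p).2 = (g q).2) := by
        intro hh
        exact hpq (hginj p hpP q hqP (Prod.ext hh.1 hh.2))
      have h1 := hps.1; have h2 := hqs.1
      unfold pairEq
      omega
    have hne13 : ¬ pairEq (g p).1 (g p).2 (g r).1 (g r).2 := by
      have hgg : ¬ ((g p).1 = (g r).1 ∧ (g p).2 = (g r).2) := by
        intro hh
        exact hpr (hginj p hpP r hrP (Prod.ext hh.1 hh.2))
      have h1 := hps.1; have h2 := hrs.1
      unfold pairEq
      omega
    have hne23 : ¬ pairEq (g q).1 (g q).2 (g r).1 (g r).2 := by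
      have hgg : ¬ ((g q).1 = (g r).1 ∧ (g q).2 = (g r).2) := by
        intro hh
        exact hqr (hginj q hqP r hrP (Prod.ext hh.1 hh.2))
      have h1 := hqs.1; have h2 := hrs.1
      unfold pairEq
      omega
    rw [hps.2, hqs.2, hrs.2] at hcol
    obtain ⟨x, y, z, hxy, hxz, hyz, e1, e2, e3⟩ :=
      collinear_tri t ht (g p).1 (g p).2 (g q).1 (g q).2 (g r).1 (g r).2
        (Nat.ne_of_lt hps.1) (Nat.ne_of_lt hqs.1) (Nat.ne_of_lt hrs.1)
        hne12 hne13 hne23 hcol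
    have c1 : χ x ≠ χ y := by
      rcases e1 with ⟨h1, h2⟩ | ⟨h1, h2⟩
      · rw [← h1, ← h2]; exact hpχ
      · rw [← h1, ← h2]; exact (Ne.symm hpχ)
    have c2 : χ x ≠ χ z := by
      rcases e2 with ⟨h1, h2⟩ | ⟨h1, h2⟩
      · rw [← h1, ← h2]; exact hqχ
      · rw [← h1, ← h2]; exact (Ne.symm hqχ)
    have c3 : χ y ≠ χ z := by
      rcases e3 with ⟨h1, h2⟩ | ⟨h1, h2⟩
      · rw [← h1, ← h2]; exact hrχ
      · rw [← h1, ← h2]; exact (Ne.symm hrχ)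
    exact (by decide : ∀ u w s : Bool, u ≠ w → u ≠ s → w ≠ s → False) _ _ _ c1 c2 c3
end
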